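/- arXiv:2511.11517 — 3 statements merged into one kernel-verified Lean document; each statement's English description precedes it below -/
import Mathlib

section
/- Let A be an n×n real symmetric matrix with nonnegative entries and zero diagonal, let d_i = Σ_j A_{ij}, D = diag(d_1,…,d_n), and L = D − A, with eigenvalues λ_1 ≤ … ≤ λ_n of L (with multiplicity). Then Σ_{i=1}^n Σ_{j=1}^n (λ_i − λ_j)² ≤ 2 Σ_{i=1}^n Σ_{j=1}^n (d_i − d_j)² + 2 (Σ_{i=1}^n d_i)². -/
open Matrix in
lemma trace_eq_sum_eig {n : ℕ} {M : Matrix (Fin n) (Fin n) ℝ} (hM : M.IsHermitian) :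
    M.trace = ∑ i, hM.eigenvalues i := by
  conv_lhs => rw [hM.spectral_theorem]
  rw [Unitary.conjStarAlgAut_apply]
  rw [Matrix.trace_mul_cycle]
  rw [(Matrix.mem_unitaryGroup_iff').mp (Matrix.IsHermitian.eigenvectorUnitary hM).2, Matrix.one_mul,
    Matrix.trace_diagonal]
  simp

open Matrix in
lemma trace_sq_eq_sum_eig_sq {n : ℕ} {M : Matrix (Fin n) (Fin n) ℝ} (hM : M.IsHermitian) :
    (M * M).trace = ∑ i, hM.eigenvalues i ^ 2 := by
  conv_lhs => rw [hM.spectral_theorem]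
  rw [Unitary.conjStarAlgAut_apply]
  rw [show ∀ U D V : Matrix (Fin n) (Fin n) ℝ, (U * D * V) * (U * D * V) = U * (D * (V * U) * D) * V
      from fun _ _ _ => by noncomm_ring,
    (Matrix.mem_unitaryGroup_iff').mp (Matrix.IsHermitian.eigenvectorUnitary hM).2,
    Matrix.mul_one, Matrix.trace_mul_cycle]
  rw [(Matrix.mem_unitaryGroup_iff').mp (Matrix.IsHermitian.eigenvectorUnitary hM).2, Matrix.one_mul,
    Matrix.diagonal_mul_diagonal, Matrix.trace_diagonal]
  simp [sq]

lemma sum_sub_sq_eq {n : ℕ} (f : Fin n → ℝ) :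
    ∑ i, ∑ j, (f i - f j) ^ 2 = 2 * n * (∑ i, f i ^ 2) - 2 * (∑ i, f i) ^ 2 := by
  have h : ∀ i j : Fin n, (f i - f j) ^ 2 = f i ^ 2 - 2 * (f i * f j) + f j ^ 2 := by
    intros; ring
  simp_rw [h, Finset.sum_add_distrib, Finset.sum_sub_distrib, Finset.sum_const,
    ← Finset.mul_sum, Finset.card_univ, Fintype.card_fin, ← Finset.sum_mul, nsmul_eq_mul]
  simp_rw [← Finset.mul_sum]
  ring

/-- For an `n × n` real symmetric matrix `A` with nonnegative entries and
zero diagonal, degrees `d_i = Σ_j A_{ij}`, degree matrix `D = diag(d)`, and Laplacian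
`L = D − A` with eigenvalues `λ_1, …, λ_n` (with multiplicity),
`Σ_{i,j} (λ_i − λ_j)² ≤ 2 Σ_{i,j} (d_i − d_j)² + 2 (Σ_i d_i)²`. -/
theorem stmt_12 (n : ℕ) (A : Matrix (Fin n) (Fin n) ℝ) (hsymm : A.IsSymm)
    (hnonneg : ∀ i j, 0 ≤ A i j) (hdiag : ∀ i, A i i = 0)
    (d : Fin n → ℝ) (hd : ∀ i, d i = ∑ j, A i j)
    (hL : (Matrix.diagonal d - A).IsHermitian) :
    ∑ i, ∑ j, (hL.eigenvalues i - hL.eigenvalues j) ^ 2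
      ≤ 2 * ∑ i, ∑ j, (d i - d j) ^ 2 + 2 * (∑ i, d i) ^ 2 := by
  set L := Matrix.diagonal d - A with hLdef
  -- trace of L is sum of degrees
  have h1 : ∑ i, hL.eigenvalues i = ∑ i, d i := by
    rw [← trace_eq_sum_eig hL, hLdef, Matrix.trace_sub, Matrix.trace_diagonal, Matrix.trace]
    simp [Matrix.diag, hdiag]
  -- entries of L
  have hLentry : ∀ i j, L i j = (if i = j then d i else 0) - A i j := by
    intro i j
    simp [hLdef, Matrix.diagonal, Matrix.sub_apply]
  -- trace of L² is Σ d² + Σ A²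
  have h2 : ∑ i, hL.eigenvalues i ^ 2 = ∑ i, d i ^ 2 + ∑ i, ∑ j, A i j ^ 2 := by
    rw [← trace_sq_eq_sum_eig_sq hL]
    have : ∀ i j : Fin n, L i j * L j i = L i j ^ 2 := by
      intro i j
      have : A j i = A i j := by
        have := congrFun (congrFun hsymm i) j
        simpa [Matrix.transpose_apply] using this
      rcases eq_or_ne i j with rfl | hij
      · ring
      · simp [hLentry, hij, Ne.symm hij, this]; ring
    rw [Matrix.trace]
    simp only [Matrix.diag_apply, Matrix.mul_apply]
    rw [show ∑ i, ∑ j, L i j * L j i = ∑ i, ∑ j, L i j ^ 2 by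
      exact Finset.sum_congr rfl fun i _ => Finset.sum_congr rfl fun j _ => this i j]
    have hsplit : ∀ i : Fin n, ∑ j, L i j ^ 2 = d i ^ 2 + ∑ j, A i j ^ 2 := by
      intro i
      have e : ∀ j : Fin n, L i j ^ 2 = (if i = j then d i ^ 2 else 0) + A i j ^ 2 := by
        intro j
        rcases eq_or_ne i j with rfl | hij
        · simp [hLentry, hdiag]
        · simp [hLentry, hij]
      simp_rw [e, Finset.sum_add_distrib, Finset.sum_ite_eq, Finset.mem_univ, if_true]
    simp_rw [hsplit, Finset.sum_add_distrib]
  -- Σ A² ≤ Σ d²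
  have h3 : ∑ i, ∑ j, A i j ^ 2 ≤ ∑ i, d i ^ 2 := by
    apply Finset.sum_le_sum
    intro i _
    rw [hd i]
    exact Finset.sum_sq_le_sq_sum_of_nonneg fun j _ => hnonneg i j
  rw [sum_sub_sq_eq, sum_sub_sq_eq, h1, h2]
  have hn : (0:ℝ) ≤ (n:ℝ) := Nat.cast_nonneg n
  nlinarith [mul_le_mul_of_nonneg_left h3 hn]
end

section
/- Let A be an n×n real symmetric matrix with nonnegative entries and zero diagonal, let d_i = Σ_j A_{ij}, D = diag(d_1,…,d_n), and L = D − A, with eigenvalues λ_1 ≤ … ≤ λ_n of L (with multiplicity) and λ_max = λ_n. Let a : ℕ → ℝ be a sequence such that the power series Σ_{k≥0} (a_k/k!) x^k converges absolutely for every real x, such that a_{2k} ≥ 0 for every k ≥ 1, and such that the series S := Σ_{k≥1} (a_{2k}/(2k)!) λ_max^{2k−2} converges. Then Σ_{i=1}^n Σ_{j=1}^n Σ_{k=0}^∞ (a_k/k!) (λ_i − λ_j)^k ≤ a_0 n² + 2 S · ( Σ_{i=1}^n Σ_{j=1}^n (d_i − d_j)² + (Σ_{i=1}^n d_i)² ).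 -/
set_option maxHeartbeats 1000000

open Matrix Finset

private lemma aux_sumsq {n : ℕ} (v : Fin n → ℝ) :
    ∑ i, ∑ j, (v i - v j) ^ 2
      = 2 * (n : ℝ) * (∑ i, v i ^ 2) - 2 * (∑ i, v i) ^ 2 := by
  have h : ∀ i : Fin n, ∑ j, (v i - v j) ^ 2
      = (n : ℝ) * v i ^ 2 + (∑ j, v j ^ 2) - 2 * (v i * ∑ j, v j) := by
    intro i
    calc ∑ j, (v i - v j) ^ 2
        = ∑ j, (v i ^ 2 + v j ^ 2 - 2 * (v i * v j)) :=
          Finset.sum_congr rfl fun j _ => by ring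
      _ = (∑ _j : Fin n, v i ^ 2) + (∑ j, v j ^ 2) - ∑ j, 2 * (v i * v j) := by
          rw [Finset.sum_sub_distrib, Finset.sum_add_distrib]
      _ = (n : ℝ) * v i ^ 2 + (∑ j, v j ^ 2) - 2 * (v i * ∑ j, v j) := by
          rw [Finset.sum_const, Finset.card_univ, Fintype.card_fin, nsmul_eq_mul,
            ← Finset.mul_sum, ← Finset.mul_sum]
  calc ∑ i, ∑ j, (v i - v j) ^ 2
      = ∑ i, ((n : ℝ) * v i ^ 2 + (∑ j, v j ^ 2) - 2 * (v i * ∑ j, v j)) :=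
        Finset.sum_congr rfl fun i _ => h i
    _ = (∑ i, (n : ℝ) * v i ^ 2) + (∑ _i : Fin n, ∑ j, v j ^ 2)
          - ∑ i, 2 * (v i * ∑ j, v j) := by
        rw [Finset.sum_sub_distrib, Finset.sum_add_distrib]
    _ = 2 * (n : ℝ) * (∑ i, v i ^ 2) - 2 * (∑ i, v i) ^ 2 := by
        rw [Finset.sum_const, Finset.card_univ, Fintype.card_fin, nsmul_eq_mul,
          ← Finset.mul_sum, ← Finset.mul_sum, ← Finset.sum_mul]
        ring

private lemma aux_series (a : ℕ → ℝ) (M : ℝ)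
    (hconv : ∀ x : ℝ, Summable fun k : ℕ => |a k / (Nat.factorial k : ℝ) * x ^ k|)
    (hpos : ∀ k : ℕ, 1 ≤ k → 0 ≤ a (2 * k))
    (hS : Summable fun k : ℕ => a (2 * k + 2) / (Nat.factorial (2 * k + 2) : ℝ) * M ^ (2 * k))
    (x : ℝ) (hx2 : x ^ 2 ≤ M ^ 2) :
    (∑' k : ℕ, a k / (Nat.factorial k : ℝ) * x ^ k)
      + (∑' k : ℕ, a k / (Nat.factorial k : ℝ) * (-x) ^ k)
      ≤ 2 * a 0
        + 2 * (∑' k : ℕ, a (2 * k + 2) / (Nat.factorial (2 * k + 2) : ℝ) * M ^ (2 * k)) * x ^ 2 := by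
  set f : ℕ → ℝ := fun k => a k / (Nat.factorial k : ℝ) * x ^ k with hf
  set g : ℕ → ℝ := fun k => a k / (Nat.factorial k : ℝ) * (-x) ^ k with hg
  have hsf : Summable f := (hconv x).of_abs
  have hsg : Summable g := by
    have := (hconv (-x)).of_abs
    exact this
  have hinj : Function.Injective (fun m : ℕ => 2 * m) := fun p q h => by dsimp only at h; omega
  have hinj1 : Function.Injective (fun m : ℕ => 2 * m + 1) := fun p q h => by dsimp only at h; omega
  have hadd : (∑' k, f k) + (∑' k, g k) = ∑' k, (f k + g k) := (hsf.tsum_add hsg).symm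
  have hsum_fg : Summable fun k => f k + g k := hsf.add hsg
  have heven : Summable fun m => f (2 * m) + g (2 * m) := hsum_fg.comp_injective hinj
  have hodd : Summable fun m => f (2 * m + 1) + g (2 * m + 1) := hsum_fg.comp_injective hinj1
  have hsplit : (∑' k, (f k + g k))
      = (∑' m, (f (2 * m) + g (2 * m))) + ∑' m, (f (2 * m + 1) + g (2 * m + 1)) :=
    (tsum_even_add_odd heven hodd).symm
  have hodd0 : ∀ m : ℕ, f (2 * m + 1) + g (2 * m + 1) = 0 := by
    intro m
    have : (-x) ^ (2 * m + 1) = -(x ^ (2 * m + 1)) := Odd.neg_pow ⟨m, by ring⟩ x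
    simp only [hf, hg, this]; ring
  have heq : ∀ m : ℕ, f (2 * m) + g (2 * m) = 2 * f (2 * m) := by
    intro m
    have : (-x) ^ (2 * m) = x ^ (2 * m) := Even.neg_pow ⟨m, by ring⟩ x
    simp only [hf, hg, this]; ring
  have hse : Summable fun m => f (2 * m) := hsf.comp_injective hinj
  have hse1 : Summable fun m => f (2 * (m + 1)) := hse.comp_injective fun p q h => by omega
  have hsplit2 : (∑' m, f (2 * m)) = f 0 + ∑' m, f (2 * (m + 1)) := hse.tsum_eq_zero_add
  have hf0 : f 0 = a 0 := by simp [hf]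
  have hterm : ∀ m : ℕ, f (2 * (m + 1))
      ≤ (a (2 * m + 2) / (Nat.factorial (2 * m + 2) : ℝ) * M ^ (2 * m)) * x ^ 2 := by
    intro m
    have hc : 0 ≤ a (2 * m + 2) / (Nat.factorial (2 * m + 2) : ℝ) := by
      have := hpos (m + 1) (by omega)
      rw [show 2 * (m + 1) = 2 * m + 2 from rfl] at this
      positivity
    have hpow : x ^ (2 * (m + 1)) ≤ M ^ (2 * m) * x ^ 2 := by
      have h1 : x ^ (2 * (m + 1)) = (x ^ 2) ^ m * x ^ 2 := by ring
      have h2 : (x ^ 2) ^ m ≤ (M ^ 2) ^ m := pow_le_pow_left₀ (sq_nonneg x) hx2 m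
      have h3 : (M ^ 2) ^ m = M ^ (2 * m) := by rw [← pow_mul, Nat.mul_comm]
      calc x ^ (2 * (m + 1)) = (x ^ 2) ^ m * x ^ 2 := h1
        _ ≤ (M ^ 2) ^ m * x ^ 2 := by nlinarith [sq_nonneg x]
        _ = M ^ (2 * m) * x ^ 2 := by rw [h3]
    calc f (2 * (m + 1))
        = a (2 * m + 2) / (Nat.factorial (2 * m + 2) : ℝ) * x ^ (2 * (m + 1)) := rfl
      _ ≤ a (2 * m + 2) / (Nat.factorial (2 * m + 2) : ℝ) * (M ^ (2 * m) * x ^ 2) :=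
          mul_le_mul_of_nonneg_left hpow hc
      _ = (a (2 * m + 2) / (Nat.factorial (2 * m + 2) : ℝ) * M ^ (2 * m)) * x ^ 2 := by ring
  have htail : (∑' m, f (2 * (m + 1)))
      ≤ (∑' m : ℕ, a (2 * m + 2) / (Nat.factorial (2 * m + 2) : ℝ) * M ^ (2 * m)) * x ^ 2 := by
    rw [← tsum_mul_right]
    exact Summable.tsum_le_tsum hterm hse1 (hS.mul_right _)
  calc (∑' k, f k) + (∑' k, g k)
      = (∑' m, (f (2 * m) + g (2 * m))) + ∑' m, (f (2 * m + 1) + g (2 * m + 1)) := by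
        rw [hadd, hsplit]
    _ = ∑' m, 2 * f (2 * m) := by
        rw [tsum_congr hodd0, tsum_zero, add_zero, tsum_congr heq]
    _ = 2 * (f 0 + ∑' m, f (2 * (m + 1))) := by rw [tsum_mul_left, hsplit2]
    _ ≤ 2 * a 0
        + 2 * (∑' k : ℕ, a (2 * k + 2) / (Nat.factorial (2 * k + 2) : ℝ) * M ^ (2 * k)) * x ^ 2 := by
        rw [hf0]; nlinarith [htail]

/-- Let `A` be an `n × n` real symmetric matrix with nonnegative entries
and zero diagonal, `d_i = Σ_j A_{ij}` the degrees, `D = diag(d)`, `L = D − A` the weighted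
Laplacian, with eigenvalues `λ_1 ≤ … ≤ λ_n` (a monotone enumeration `μ` of the eigenvalues
with multiplicity) and `λ_max = λ_n`. Let `a : ℕ → ℝ` be such that `Σ_k (a_k/k!) x^k`
converges absolutely for all real `x`, `a_{2k} ≥ 0` for all `k ≥ 1`, and the series
`S = Σ_{k≥1} (a_{2k}/(2k)!) λ_max^{2k−2}` converges. Then
`Σ_{i,j} Σ_k (a_k/k!) (λ_i − λ_j)^k ≤ a_0 n² + 2S (Σ_{i,j} (d_i − d_j)² + (Σ_i d_i)²)`. -/
theorem stmt_13 (n : ℕ) (hn : 0 < n) (A : Matrix (Fin n) (Fin n) ℝ)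
    (hsymm : A.IsSymm) (hnonneg : ∀ i j, 0 ≤ A i j) (hdiag : ∀ i, A i i = 0)
    (d : Fin n → ℝ) (hd : ∀ i, d i = ∑ j, A i j)
    (hL : (Matrix.diagonal d - A).IsHermitian)
    (μ : Fin n → ℝ) (hmono : Monotone μ) (σ : Equiv.Perm (Fin n))
    (hμ : μ = hL.eigenvalues ∘ σ)
    (a : ℕ → ℝ)
    (hconv : ∀ x : ℝ, Summable fun k : ℕ => |a k / (Nat.factorial k : ℝ) * x ^ k|)
    (hpos : ∀ k : ℕ, 1 ≤ k → 0 ≤ a (2 * k))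
    (hS : Summable fun k : ℕ =>
      a (2 * k + 2) / (Nat.factorial (2 * k + 2) : ℝ) * μ ⟨n - 1, by omega⟩ ^ (2 * k)) :
    ∑ i, ∑ j, (∑' k : ℕ, a k / (Nat.factorial k : ℝ) * (μ i - μ j) ^ k)
      ≤ a 0 * (n : ℝ) ^ 2
        + 2 * (∑' k : ℕ,
              a (2 * k + 2) / (Nat.factorial (2 * k + 2) : ℝ) * μ ⟨n - 1, by omega⟩ ^ (2 * k))
          * ((∑ i, ∑ j, (d i - d j) ^ 2) + (∑ i, d i) ^ 2) := by
  classical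
  set L : Matrix (Fin n) (Fin n) ℝ := Matrix.diagonal d - A with hLdef
  set M : ℝ := μ ⟨n - 1, by omega⟩ with hMdef
  set T : ℝ := ∑' k : ℕ, a (2 * k + 2) / (Nat.factorial (2 * k + 2) : ℝ) * M ^ (2 * k) with hTdef
  -- quadratic form expansion
  have expand : ∀ x : Fin n → ℝ, x ⬝ᵥ L *ᵥ x
      = (∑ i, ∑ j, A i j * x i ^ 2) - ∑ i, ∑ j, A i j * (x i * x j) := by
    intro x
    simp only [hLdef, dotProduct, mulVec, Finset.mul_sum]
    rw [← Finset.sum_sub_distrib]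
    refine Finset.sum_congr rfl fun i _ => ?_
    simp only [Matrix.sub_apply, Matrix.diagonal_apply]
    have h1 : ∀ j, x i * (((if i = j then d i else 0) - A i j) * x j)
        = (if i = j then d i * (x i * x j) else 0) - A i j * (x i * x j) := fun j => by
      split <;> ring
    rw [Finset.sum_congr rfl fun j _ => h1 j, Finset.sum_sub_distrib, Finset.sum_ite_eq]
    simp only [Finset.mem_univ, if_true]
    congr 1
    rw [hd, Finset.sum_mul]
    exact Finset.sum_congr rfl fun j _ => by ring
  have hswap : ∀ x : Fin n → ℝ,
      (∑ i, ∑ j, A i j * x j ^ 2) = ∑ i, ∑ j, A i j * x i ^ 2 := by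
    intro x
    rw [Finset.sum_comm]
    exact Finset.sum_congr rfl fun i _ => Finset.sum_congr rfl fun j _ => by
      rw [hsymm.apply]
  -- PSD
  have hPSD : L.PosSemidef := by
    refine .of_dotProduct_mulVec_nonneg hL fun x => ?_
    have h2 : 2 * (x ⬝ᵥ L *ᵥ x) = ∑ i, ∑ j, A i j * (x i - x j) ^ 2 := by
      rw [expand x]
      have : ∀ i j, A i j * (x i - x j) ^ 2
          = A i j * x i ^ 2 + A i j * x j ^ 2 - 2 * (A i j * (x i * x j)) := fun i j => by ring
      rw [Finset.sum_congr rfl fun i _ => Finset.sum_congr rfl fun j _ => this i j]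
      simp only [Finset.sum_sub_distrib, Finset.sum_add_distrib, ← Finset.mul_sum]
      rw [hswap x]
      ring
    have h3 : 0 ≤ ∑ i, ∑ j, A i j * (x i - x j) ^ 2 :=
      Finset.sum_nonneg fun i _ => Finset.sum_nonneg fun j _ =>
        mul_nonneg (hnonneg i j) (sq_nonneg _)
    have : (0 : ℝ) ≤ x ⬝ᵥ L *ᵥ x := by linarith
    simpa using this
  -- spectral trace identities
  set V : Matrix (Fin n) (Fin n) ℝ := (hL.eigenvectorUnitary : Matrix (Fin n) (Fin n) ℝ) with hV
  set D0 : Matrix (Fin n) (Fin n) ℝ := diagonal (RCLike.ofReal ∘ hL.eigenvalues) with hD0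
  have key : L = V * D0 * star V := hL.spectral_theorem
  have hV2 : star V * V = 1 := Matrix.mem_unitaryGroup_iff'.mp hL.eigenvectorUnitary.2
  have t1 : Matrix.trace L = ∑ i, hL.eigenvalues i := by
    conv_lhs => rw [key]
    rw [Matrix.trace_mul_cycle, hV2, one_mul, hD0, Matrix.trace_diagonal]
    simp
  have t2 : Matrix.trace (L * L) = ∑ i, hL.eigenvalues i ^ 2 := by
    conv_lhs => rw [key]
    have e : (V * D0 * star V) * (V * D0 * star V) = V * (D0 * D0) * star V := by
      simp only [mul_assoc]
      rw [← mul_assoc (star V) V, hV2, one_mul]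
    rw [e, Matrix.trace_mul_cycle, hV2, one_mul, diagonal_mul_diagonal,
      Matrix.trace_diagonal]
    simp [sq]
  -- direct trace computations
  have tr1 : Matrix.trace L = ∑ i, d i := by
    simp [hLdef, Matrix.trace, Matrix.diag, hdiag]
  have hLsym : ∀ i j, L j i = L i j := by
    intro i j
    have := congrFun (congrFun hL i) j
    simpa [Matrix.conjTranspose_apply] using this
  have tr2 : Matrix.trace (L * L) = (∑ i, d i ^ 2) + ∑ i, ∑ j, A i j ^ 2 := by
    have hLL : ∀ i, (∑ j, L i j * L j i) = d i ^ 2 + ∑ j, A i j ^ 2 := by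
      intro i
      have e1 : ∀ j, L i j * L j i = A i j ^ 2 + (if i = j then d i ^ 2 else 0) := by
        intro j
        rw [hLsym i j]
        by_cases h : i = j
        · subst h
          simp only [hLdef, Matrix.sub_apply, Matrix.diagonal_apply_eq, hdiag i,
            eq_self_iff_true, if_true]
          ring
        · simp only [hLdef, Matrix.sub_apply, Matrix.diagonal_apply, h, if_neg h, if_false]
          ring
      rw [Finset.sum_congr rfl fun j _ => e1 j, Finset.sum_add_distrib, Finset.sum_ite_eq]
      simp only [Finset.mem_univ, if_true]
      ring
    calc Matrix.trace (L * L) = ∑ i, ∑ j, L i j * L j i := by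
          simp [Matrix.trace, Matrix.diag, Matrix.mul_apply]
      _ = ∑ i, (d i ^ 2 + ∑ j, A i j ^ 2) := Finset.sum_congr rfl fun i _ => hLL i
      _ = (∑ i, d i ^ 2) + ∑ i, ∑ j, A i j ^ 2 := Finset.sum_add_distrib
  -- μ power sums
  have hμsum : ∑ i, μ i = ∑ i, d i := by
    calc ∑ i, μ i = ∑ i, hL.eigenvalues (σ i) := by rw [hμ]; rfl
      _ = ∑ i, hL.eigenvalues i := Equiv.sum_comp σ hL.eigenvalues
      _ = ∑ i, d i := by rw [← t1, tr1]
  have hμsq : ∑ i, μ i ^ 2 = (∑ i, d i ^ 2) + ∑ i, ∑ j, A i j ^ 2 := by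
    calc ∑ i, μ i ^ 2 = ∑ i, hL.eigenvalues (σ i) ^ 2 := by rw [hμ]; rfl
      _ = ∑ i, hL.eigenvalues i ^ 2 := Equiv.sum_comp σ (fun i => hL.eigenvalues i ^ 2)
      _ = (∑ i, d i ^ 2) + ∑ i, ∑ j, A i j ^ 2 := by rw [← t2, tr2]
  -- eigenvalue bounds
  have hμ0 : ∀ i, 0 ≤ μ i := by
    intro i
    rw [hμ]
    exact hPSD.eigenvalues_nonneg (σ i)
  have hμleM : ∀ i, μ i ≤ M := by
    intro i
    exact hmono (by rw [Fin.le_def]; simp; omega)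
  have hM0 : 0 ≤ M := hμ0 _
  have hx2 : ∀ i j, (μ i - μ j) ^ 2 ≤ M ^ 2 := fun i j =>
    sq_le_sq' (by linarith [hμ0 i, hμleM j]) (by linarith [hμ0 j, hμleM i])
  -- key per-pair inequality
  have key2 : ∀ i j, (∑' k : ℕ, a k / (Nat.factorial k : ℝ) * (μ i - μ j) ^ k)
      + (∑' k : ℕ, a k / (Nat.factorial k : ℝ) * (μ j - μ i) ^ k)
      ≤ 2 * a 0 + 2 * T * (μ i - μ j) ^ 2 := by
    intro i j
    have := aux_series a M hconv hpos hS (μ i - μ j) (hx2 i j)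
    simpa only [neg_sub, ← hTdef] using this
  -- doubling
  set F : Fin n → Fin n → ℝ :=
    fun i j => ∑' k : ℕ, a k / (Nat.factorial k : ℝ) * (μ i - μ j) ^ k with hF
  have hflip : (∑ i, ∑ j, F i j) = ∑ i, ∑ j, F j i := Finset.sum_comm
  have hdouble : 2 * (∑ i, ∑ j, F i j) = ∑ i, ∑ j, (F i j + F j i) := by
    have hsplit : (∑ i, ∑ j, (F i j + F j i))
        = (∑ i, ∑ j, F i j) + (∑ i, ∑ j, F j i) := by
      simp [Finset.sum_add_distrib]
    rw [hsplit, ← hflip, two_mul]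
  have hbound : (∑ i, ∑ j, (F i j + F j i))
      ≤ ∑ i, ∑ j, (2 * a 0 + 2 * T * (μ i - μ j) ^ 2) :=
    Finset.sum_le_sum fun i _ => Finset.sum_le_sum fun j _ => key2 i j
  have hRHS : (∑ i, ∑ j, (2 * a 0 + 2 * T * (μ i - μ j) ^ 2))
      = (n : ℝ) ^ 2 * (2 * a 0) + 2 * T * ∑ i, ∑ j, (μ i - μ j) ^ 2 := by
    simp only [Finset.sum_add_distrib, ← Finset.mul_sum, Finset.sum_const, Finset.card_univ,
      Fintype.card_fin, nsmul_eq_mul]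
    ring
  -- quadratic sums
  have hQμ : (∑ i, ∑ j, (μ i - μ j) ^ 2)
      = 2 * (n : ℝ) * (∑ i, μ i ^ 2) - 2 * (∑ i, μ i) ^ 2 := aux_sumsq μ
  have hQd : (∑ i, ∑ j, (d i - d j) ^ 2)
      = 2 * (n : ℝ) * (∑ i, d i ^ 2) - 2 * (∑ i, d i) ^ 2 := aux_sumsq d
  have hA2 : (∑ i, ∑ j, A i j ^ 2) ≤ ∑ i, d i ^ 2 :=
    Finset.sum_le_sum fun i _ => by
      rw [hd]
      exact Finset.sum_sq_le_sq_sum_of_nonneg fun j _ => hnonneg i j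
  have hQle : (∑ i, ∑ j, (μ i - μ j) ^ 2)
      ≤ 2 * ((∑ i, ∑ j, (d i - d j) ^ 2) + (∑ i, d i) ^ 2) := by
    rw [hQμ, hμsq, hμsum, hQd]
    have hn0 : (0 : ℝ) ≤ (n : ℝ) := Nat.cast_nonneg n
    nlinarith [hA2, hn0]
  have hT0 : 0 ≤ T := by
    rw [hTdef]
    refine tsum_nonneg fun m => ?_
    have := hpos (m + 1) (by omega)
    rw [show 2 * (m + 1) = 2 * m + 2 from rfl] at this
    positivity
  have hfinal : T * (∑ i, ∑ j, (μ i - μ j) ^ 2)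
      ≤ T * (2 * ((∑ i, ∑ j, (d i - d j) ^ 2) + (∑ i, d i) ^ 2)) :=
    mul_le_mul_of_nonneg_left hQle hT0
  have h2L : 2 * (∑ i, ∑ j, F i j)
      ≤ (n : ℝ) ^ 2 * (2 * a 0) + 2 * T * ∑ i, ∑ j, (μ i - μ j) ^ 2 := by
    rw [hdouble]; rw [← hRHS]; exact hbound
  show (∑ i, ∑ j, F i j)
      ≤ a 0 * (n : ℝ) ^ 2 + 2 * T * ((∑ i, ∑ j, (d i - d j) ^ 2) + (∑ i, d i) ^ 2)
  nlinarith [h2L, hfinal]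
end

section
/- Let G = (V,E) be a finite simple graph with |V| = n and E nonempty, let L be its unweighted Laplacian with eigenvalues λ_1 ≤ λ_2 ≤ … ≤ λ_n, and let z ∈ ℝ^n satisfy 𝟙^T z = 0. Then (1/|E|) Σ_{e∈E} ‖W_e z‖₂² ≤ (1 − λ_2/(2|E|)) · ‖z‖₂². -/
open scoped Matrix
open Finset

/-- For an edge `e = {p, q}`, the gossip matrix `W_e = I − (1/2)(e_p − e_q)(e_p − e_q)ᵀ`,
where `e_v` is the standard basis vector of vertex `v`. -/
noncomputable def gossip (n : ℕ) (e : Sym2 (Fin n)) : Matrix (Fin n) (Fin n) ℝ :=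
  Sym2.lift
    ⟨fun p q => 1 - (1 / 2 : ℝ) •
        Matrix.vecMulVec (Pi.single p 1 - Pi.single q 1) (Pi.single p 1 - Pi.single q 1),
      by
        intro p q
        ext i j
        simp [Matrix.vecMulVec_apply]
        ring⟩ e

lemma gossip_mulVec (n : ℕ) (p q : Fin n) (z : Fin n → ℝ) :
    (gossip n s(p, q)) *ᵥ z
      = z - ((z p - z q) / 2) • (Pi.single p 1 - Pi.single q 1) := by
  have h1 : (gossip n s(p, q)) = 1 - (1 / 2 : ℝ) •
        Matrix.vecMulVec (Pi.single p 1 - Pi.single q 1) (Pi.single p 1 - Pi.single q 1) :=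
    Sym2.lift_mk _ p q
  funext i
  simp only [h1, Matrix.sub_mulVec, Matrix.one_mulVec, Matrix.smul_mulVec,
    Pi.sub_apply, Pi.smul_apply, smul_eq_mul]
  have h2 : (Matrix.vecMulVec (Pi.single p 1 - Pi.single q 1) (Pi.single p 1 - Pi.single q 1 : Fin n → ℝ)) *ᵥ z
      = ((z p - z q)) • (Pi.single p 1 - Pi.single q 1) := by
    funext k
    simp [Matrix.mulVec, Matrix.vecMulVec_apply, dotProduct, mul_assoc, ← Finset.mul_sum,
      sub_mul, Pi.single_apply, Finset.sum_sub_distrib, ite_mul]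
    split_ifs <;> ring
  rw [h2]
  simp
  ring

lemma sum_sq_sub (n : ℕ) (p q : Fin n) (hpq : p ≠ q) (z : Fin n → ℝ) :
    ∑ i, (z - ((z p - z q) / 2) • (Pi.single p 1 - Pi.single q 1 : Fin n → ℝ)) i ^ 2
      = ∑ i, z i ^ 2 - (1 / 2) * (z p - z q) ^ 2 := by
  set c : ℝ := (z p - z q) / 2 with hc
  have h1 : ∀ i, (z - c • (Pi.single p 1 - Pi.single q 1 : Fin n → ℝ)) i ^ 2
      = z i ^ 2 - 2 * c * (z i * ((Pi.single p 1 - Pi.single q 1 : Fin n → ℝ) i))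
        + c ^ 2 * ((Pi.single p 1 - Pi.single q 1 : Fin n → ℝ) i) ^ 2 := by
    intro i; simp only [Pi.sub_apply, Pi.smul_apply, smul_eq_mul]; ring
  simp only [h1, Finset.sum_add_distrib, Finset.sum_sub_distrib, ← Finset.mul_sum]
  have h2 : ∑ i, z i * ((Pi.single p 1 - Pi.single q 1 : Fin n → ℝ) i) = z p - z q := by
    simp [Pi.single_apply, mul_sub, Finset.sum_sub_distrib, mul_ite]
  have h3 : ∑ i, ((Pi.single p 1 - Pi.single q 1 : Fin n → ℝ) i) ^ 2 = 2 := by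
    have h4 : ∀ i, ((Pi.single p 1 - Pi.single q 1 : Fin n → ℝ) i) ^ 2
        = (if i = p then (1:ℝ) else 0) + (if i = q then (1:ℝ) else 0)
          - 2 * (if i = p then (if i = q then (1:ℝ) else 0) else 0) := by
      intro i; simp only [Pi.sub_apply, Pi.single_apply]
      split_ifs <;> ring
    simp only [h4, Finset.sum_add_distrib, Finset.sum_sub_distrib, ← Finset.mul_sum,
      Finset.sum_ite_eq', Finset.mem_univ, if_true, if_neg hpq]
    norm_num
  rw [h2, h3, hc]; ring

lemma double_sum_edge (n : ℕ) (G : SimpleGraph (Fin n)) [DecidableRel G.Adj]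
    (F : Sym2 (Fin n) → ℝ) :
    ∑ i, ∑ j, (if G.Adj i j then F s(i, j) else 0)
      = 2 * ∑ e ∈ G.edgeFinset, F e := by
  classical
  have h0 : ∑ i, ∑ j, (if G.Adj i j then F s(i, j) else 0)
      = ∑ p ∈ (Finset.univ ×ˢ Finset.univ).filter (fun p : Fin n × Fin n => G.Adj p.1 p.2),
          F s(p.1, p.2) := by
    rw [Finset.sum_filter, Finset.sum_product]
  rw [h0]
  rw [← Finset.sum_fiberwise_of_maps_to (g := fun p : Fin n × Fin n => Sym2.mk p.1 p.2)
    (t := G.edgeFinset) (f := fun p => F s(p.1, p.2)) (fun p hp => by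
      simp only [Finset.mem_filter] at hp
      simpa [SimpleGraph.mem_edgeFinset] using hp.2)]
  rw [Finset.mul_sum]
  refine Finset.sum_congr rfl fun e he => ?_
  induction e with
  | _ a b =>
    simp only [SimpleGraph.mem_edgeFinset, SimpleGraph.mem_edgeSet] at he
    have hab : a ≠ b := he.ne
    have hfib : ((Finset.univ ×ˢ Finset.univ).filter
        (fun p : Fin n × Fin n => G.Adj p.1 p.2)).filter
          (fun p => Sym2.mk p.1 p.2 = s(a, b)) = {(a, b), (b, a)} := by
      ext p
      obtain ⟨x, y⟩ := p
      simp only [Finset.mem_filter, Finset.mem_product, Finset.mem_univ, true_and,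
        Finset.mem_insert, Finset.mem_singleton, Prod.mk.injEq, Sym2.eq_iff,
        Prod.swap_prod_mk]
      constructor
      · rintro ⟨_, h⟩; tauto
      · rintro (⟨rfl, rfl⟩ | ⟨rfl, rfl⟩)
        · exact ⟨he, Or.inl ⟨rfl, rfl⟩⟩
        · exact ⟨he.symm, Or.inr ⟨rfl, rfl⟩⟩
    rw [hfib]
    rw [Finset.sum_insert (by simp [Prod.ext_iff, hab]), Finset.sum_singleton]
    have : s(b, a) = s(a, b) := Sym2.eq_swap
    rw [this]
    ring

lemma rayleigh (n : ℕ) (hn : 2 ≤ n) (G : SimpleGraph (Fin n)) [DecidableRel G.Adj]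
    (hL : (G.lapMatrix ℝ).IsHermitian)
    (μ : Fin n → ℝ) (hmono : Monotone μ) (σ : Equiv.Perm (Fin n))
    (hμ : μ = hL.eigenvalues ∘ σ)
    (z : Fin n → ℝ) (hz : ∑ i, z i = 0) :
    μ ⟨1, Nat.lt_of_lt_of_le (by norm_num) hn⟩ * ∑ i, z i ^ 2 ≤ z ⬝ᵥ (G.lapMatrix ℝ *ᵥ z) := by
  classical
  set A := G.lapMatrix ℝ with hA
  set t := μ ⟨1, by omega⟩ with ht
  have hZnn : (0:ℝ) ≤ ∑ i, z i ^ 2 := Finset.sum_nonneg fun i _ => sq_nonneg _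
  have hQnn : (0:ℝ) ≤ z ⬝ᵥ (A *ᵥ z) := by
    have := (SimpleGraph.posSemidef_lapMatrix ℝ G).dotProduct_mulVec_nonneg z
    simpa using this
  rcases le_or_gt t 0 with htle | htpos
  · exact le_trans (mul_nonpos_of_nonpos_of_nonneg htle hZnn) hQnn
  -- spectral setup
  set b := hL.eigenvectorBasis with hb
  set lam := hL.eigenvalues with hlam
  -- view vectors in EuclideanSpace
  set z' : EuclideanSpace ℝ (Fin n) := WithLp.toLp 2 z with hz'
  set one' : EuclideanSpace ℝ (Fin n) := WithLp.toLp 2 (fun _ => 1) with hone'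
  set c : Fin n → ℝ := fun i => b.repr z' i with hcdef
  set d : Fin n → ℝ := fun i => b.repr one' i with hddef
  -- inner products via repr
  have hinner : ∀ x y : EuclideanSpace ℝ (Fin n),
      (inner ℝ x y : ℝ) = ∑ i, b.repr x i * b.repr y i := by
    intro x y
    rw [← b.repr.inner_map_map x y, PiLp.inner_apply]
    exact Finset.sum_congr rfl fun i _ => by simp [RCLike.inner_apply, mul_comm]
  have hinner' : ∀ x y : EuclideanSpace ℝ (Fin n),
      (inner ℝ x y : ℝ) = ∑ i, x i * y i := by
    intro x y; simp [PiLp.inner_apply, RCLike.inner_apply, mul_comm]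
  -- key : ⟪b i, A *ᵥ x⟫ = lam i * ⟪b i, x⟫
  have hkey : ∀ (i : Fin n) (x : Fin n → ℝ),
      ((b i : EuclideanSpace ℝ (Fin n)) : Fin n → ℝ) ⬝ᵥ (A *ᵥ x) = lam i * ((b i : Fin n → ℝ) ⬝ᵥ x) := by
    intro i x
    rw [Matrix.dotProduct_mulVec]
    have hAs : (b i : Fin n → ℝ) ᵥ* A = lam i • (b i : Fin n → ℝ) := by
      have h1 : Aᵀ = A := by
        have := hL; rw [Matrix.IsHermitian] at this
        rwa [Matrix.conjTranspose_eq_transpose_of_trivial] at this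
      rw [← h1, Matrix.vecMul_transpose]
      exact hL.mulVec_eigenvectorBasis i
    rw [hAs, smul_dotProduct, smul_eq_mul]
  -- repr of A *ᵥ x
  have hrepr : ∀ (x : Fin n → ℝ) (i : Fin n),
      b.repr (WithLp.toLp 2 (A *ᵥ x)) i = lam i * b.repr (WithLp.toLp 2 x) i := by
    intro x i
    rw [b.repr_apply_apply, b.repr_apply_apply, hinner', hinner']
    exact hkey i x
  have hQ : z ⬝ᵥ (A *ᵥ z) = ∑ i, lam i * c i ^ 2 := by
    have h1 : z ⬝ᵥ (A *ᵥ z) = (inner ℝ z' (WithLp.toLp 2 (A *ᵥ z)) : ℝ) := by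
      rw [hinner']; rfl
    rw [h1, hinner]
    refine Finset.sum_congr rfl fun i _ => ?_
    rw [hrepr z i]
    simp only [← hz', hcdef]; ring
  have hZ : ∑ i, z i ^ 2 = ∑ i, c i ^ 2 := by
    have h1 : (inner ℝ z' z' : ℝ) = ∑ i, c i * c i := hinner z' z'
    rw [hinner'] at h1
    simpa [pow_two] using h1
  -- lam i * d i = 0
  have hld : ∀ i, lam i * d i = 0 := by
    intro i
    have h0 : A *ᵥ (fun _ => 1) = 0 := SimpleGraph.lapMatrix_mulVec_const_eq_zero G
    have h1 : b.repr (WithLp.toLp 2 (A *ᵥ (fun _ => 1))) i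
        = lam i * d i := hrepr (fun _ => 1) i
    rw [h0] at h1
    rw [← h1]
    simp
  -- orthogonality: ∑ c i * d i = 0
  have hcd : ∑ i, c i * d i = 0 := by
    have h1 : (inner ℝ z' one' : ℝ) = ∑ i, c i * d i := hinner z' one'
    rw [hinner'] at h1
    simp only [mul_one] at h1
    rw [← h1]
    simp only [hone', mul_one]
    exact hz
  -- j0
  set j0 := σ ⟨0, by omega⟩ with hj0
  have hlam_eq : ∀ j, lam j = μ (σ.symm j) := by
    intro j; rw [hμ]; simp
  have hlam_ge : ∀ j, j ≠ j0 → t ≤ lam j := by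
    intro j hjne
    rw [hlam_eq]
    apply hmono
    have : σ.symm j ≠ ⟨0, by omega⟩ := by
      intro h
      apply hjne
      rw [hj0, ← h]; simp
    rw [Fin.le_def]
    exact Nat.one_le_iff_ne_zero.2 (fun h => this (Fin.ext h))
  have hd0 : ∀ j, j ≠ j0 → d j = 0 := by
    intro j hj
    have := hld j
    have hpos : 0 < lam j := lt_of_lt_of_le htpos (hlam_ge j hj)
    exact (mul_eq_zero.1 this).resolve_left (ne_of_gt hpos)
  have hdj0 : d j0 ≠ 0 := by
    intro h0
    have hd : ∀ j, d j = 0 := by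
      intro j
      by_cases hj : j = j0
      · rw [hj]; exact h0
      · exact hd0 j hj
    have h1 : (inner ℝ one' one' : ℝ) = ∑ i, d i * d i := hinner one' one'
    rw [hinner'] at h1
    simp only [hd, mul_zero, Finset.sum_const_zero, hone'] at h1
    norm_num at h1
    omega
  have hcj0 : c j0 = 0 := by
    have h1 : ∑ i, c i * d i = c j0 * d j0 := by
      apply Finset.sum_eq_single
      · intro j _ hj; rw [hd0 j hj, mul_zero]
      · intro h; exact absurd (Finset.mem_univ j0) h
    rw [h1] at hcd
    exact (mul_eq_zero.1 hcd).resolve_right hdj0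
  rw [hQ, hZ, Finset.mul_sum]
  apply Finset.sum_le_sum
  intro i _
  by_cases hi : i = j0
  · rw [hi, hcj0]; simp
  · exact mul_le_mul_of_nonneg_right (hlam_ge i hi) (sq_nonneg _)

/-- Let `G = (V, E)` be a finite simple graph with `|V| = n` and `E`
nonempty, `L` its unweighted Laplacian with eigenvalues `λ_1 ≤ λ_2 ≤ … ≤ λ_n` (a monotone
enumeration `μ` of the eigenvalues with multiplicity), and let `z ∈ ℝⁿ` with `𝟙ᵀz = 0`.
Then `(1/|E|) Σ_{e ∈ E} ‖W_e z‖₂² ≤ (1 − λ_2/(2|E|)) ‖z‖₂²`. -/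
theorem stmt_15 (n : ℕ) (hn : 2 ≤ n) (G : SimpleGraph (Fin n)) [DecidableRel G.Adj]
    (hE : G.edgeFinset.Nonempty)
    (hL : (G.lapMatrix ℝ).IsHermitian)
    (μ : Fin n → ℝ) (hmono : Monotone μ) (σ : Equiv.Perm (Fin n))
    (hμ : μ = hL.eigenvalues ∘ σ)
    (z : Fin n → ℝ) (hz : ∑ i, z i = 0) :
    (1 / (G.edgeFinset.card : ℝ)) * ∑ e ∈ G.edgeFinset, (∑ i, ((gossip n e) *ᵥ z) i ^ 2)
      ≤ (1 - μ ⟨1, by omega⟩ / (2 * (G.edgeFinset.card : ℝ))) * ∑ i, z i ^ 2 := by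
  classical
  set m : ℝ := (G.edgeFinset.card : ℝ) with hm
  have hmpos : 0 < m := by
    rw [hm]; exact_mod_cast Finset.card_pos.2 hE
  set Z : ℝ := ∑ i, z i ^ 2 with hZdef
  set F : Sym2 (Fin n) → ℝ :=
    Sym2.lift ⟨fun p q => (z p - z q) ^ 2, fun p q => by ring⟩
    with hFdef
  have hQnn : (0:ℝ) ≤ z ⬝ᵥ (G.lapMatrix ℝ *ᵥ z) := by
    have := (SimpleGraph.posSemidef_lapMatrix ℝ G).dotProduct_mulVec_nonneg z
    simpa using this
  -- per-edge identity
  have hedge : ∀ e ∈ G.edgeFinset, ∑ i, ((gossip n e) *ᵥ z) i ^ 2 = Z - (1/2) * F e := by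
    intro e he
    have hdiag : ¬ e.IsDiag := G.not_isDiag_of_mem_edgeSet (SimpleGraph.mem_edgeFinset.1 he)
    induction e with
    | _ p q =>
      have hpq : p ≠ q := by simpa using hdiag
      rw [gossip_mulVec, sum_sq_sub n p q hpq z]
      simp [hFdef, hZdef]
  -- edge sum of F equals quadratic form
  have hF : ∑ e ∈ G.edgeFinset, F e = z ⬝ᵥ (G.lapMatrix ℝ *ᵥ z) := by
    have h1 := SimpleGraph.lapMatrix_toLinearMap₂' ℝ G z
    rw [Matrix.toLinearMap₂'_apply'] at h1
    have h2 : ∑ i, ∑ j, (if G.Adj i j then (z i - z j)^2 else 0)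
        = ∑ i, ∑ j, (if G.Adj i j then F s(i, j) else 0) := by
      refine Finset.sum_congr rfl fun i _ => Finset.sum_congr rfl fun j _ => ?_
      simp [hFdef]
    rw [h1, h2, double_sum_edge n G F]
    ring
  have hsum : ∑ e ∈ G.edgeFinset, (∑ i, ((gossip n e) *ᵥ z) i ^ 2)
      = m * Z - (1/2) * (z ⬝ᵥ (G.lapMatrix ℝ *ᵥ z)) := by
    rw [Finset.sum_congr rfl hedge, Finset.sum_sub_distrib, Finset.sum_const, ← Finset.mul_sum, hF]
    simp [hm, mul_comm]
  have hray := rayleigh n hn G hL μ hmono σ hμ z hz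
  set t : ℝ := μ ⟨1, by omega⟩ with htdef
  set Q : ℝ := z ⬝ᵥ (G.lapMatrix ℝ *ᵥ z) with hQdef
  rw [hsum]
  have key : t * Z ≤ Q := hray
  have h2m : 0 < 2 * m := by linarith
  have e1 : 1/m * (m * Z - 1/2 * Q) = Z - Q / (2*m) := by field_simp
  have e2 : (1 - t/(2*m)) * Z = Z - t * Z/(2*m) := by ring
  rw [e1, e2]
  have h3 : t * Z / (2*m) ≤ Q / (2*m) := by gcongr
  linarith
end
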